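/- Let A be a fixed real m×n matrix, q a non-negative integer, and ℓ a positive integer with ℓ ≤ min(n, rank(A)). Let G be a random real n×ℓ matrix whose entries are independent standard Gaussian random variables. Then, with probability 1, the matrix Y = (AAᵀ)^q·A·G has rank ℓ (full column rank). -/

import Mathlib

/-!
Write `B = (AAᵀ)^q A`. Since `AAᵀ` is symmetric, `(AAᵀ)^q A x = 0` forces `Ax = 0`, so
`rank B = rank A ≥ ℓ`. The Gram determinant `det ((BG)ᵀ(BG))` is a polynomial in the entries
of `G` that vanishes exactly when `BG` has rank `< ℓ`; it is not the zero polynomial because some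
`G₀` (preimages of `ℓ` independent vectors of the range of `B`) gives `rank (BG₀) = ℓ`. Finally the
zero set of a nonzero polynomial is null for a product of atomless measures: by Fubini, for
almost every value of the last `N` variables the leading coefficient in the first one is nonzero,
and a nonzero univariate polynomial has finitely many roots.
-/

open Matrix MeasureTheory ProbabilityTheory

namespace Matrix

variable {m n ι K : Type*} [Fintype m] [Fintype n] [Field K]

theorem rank_eq_card_iff_det_ne_zero [DecidableEq n] (N : Matrix n n K) :
    N.rank = Fintype.card n ↔ N.det ≠ 0 := by
  refine ⟨fun h => ?_, rank_of_det_ne_zero⟩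
  have hsurj : Function.Surjective N.mulVecLin := by
    rw [← LinearMap.range_eq_top]
    exact Submodule.eq_top_of_finrank_eq (h.trans (Module.finrank_fintype_fun_eq_card K).symm)
  exact isUnit_iff_ne_zero.mp <|
    (isUnit_iff_isUnit_det N).mp (mulVec_surjective_iff_isUnit.mp hsurj)

theorem exists_rank_mul_eq_card [Fintype ι] (B : Matrix m n K) (h : Fintype.card ι ≤ B.rank) :
    ∃ G : Matrix n ι K, (B * G).rank = Fintype.card ι := by
  obtain ⟨f, hf⟩ := exists_linearIndependent_of_le_finrank h
  have hf' := (hf.comp _ (Fintype.equivFin ι).injective).map' _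
    (LinearMap.range B.mulVecLin).ker_subtype
  choose x hx using fun i => (f (Fintype.equivFin ι i)).2
  refine ⟨(of x)ᵀ, ?_⟩
  rw [← rank_transpose]
  refine LinearIndependent.rank_matrix ?_
  have hrows : ((B * (of x)ᵀ)ᵀ).row
      = (LinearMap.range B.mulVecLin).subtype ∘ f ∘ Fintype.equivFin ι := by
    ext i k
    simp [← hx i, row, mul_apply, mulVec, dotProduct]
  rw [hrows]
  exact hf'

section LinearOrderedField

variable [LinearOrder K] [IsStrictOrderedRing K]

theorem mulVec_eq_zero_of_transpose_mul_self_mulVec_eq_zero (A : Matrix m n K) {v : n → K}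
    (h : (Aᵀ * A) *ᵥ v = 0) : A *ᵥ v = 0 :=
  (SetLike.ext_iff.mp (ker_mulVecLin_transpose_mul_self A) v).mp h

theorem IsSymm.mulVec_eq_zero_of_pow_mulVec_eq_zero [DecidableEq n] {S : Matrix n n K}
    (hS : S.IsSymm) {k : ℕ} (hk : k ≠ 0) {v : n → K} (h : S ^ k *ᵥ v = 0) : S *ᵥ v = 0 := by
  induction k generalizing v with
  | zero => exact absurd rfl hk
  | succ k ih =>
    rcases eq_or_ne k 0 with rfl | hk'
    · simpa using h
    have hSSv : S *ᵥ (S *ᵥ v) = 0 := ih hk' (by rwa [mulVec_mulVec, ← pow_succ])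
    refine S.mulVec_eq_zero_of_transpose_mul_self_mulVec_eq_zero ?_
    rwa [hS.eq, ← mulVec_mulVec]

theorem ker_mulVecLin_pow_mul_transpose_mul [DecidableEq m] (A : Matrix m n K) (q : ℕ) :
    LinearMap.ker ((A * Aᵀ) ^ q * A).mulVecLin = LinearMap.ker A.mulVecLin := by
  ext x : 1
  simp only [LinearMap.mem_ker, mulVecLin_apply]
  refine ⟨fun h => ?_, fun h => by rw [← mulVec_mulVec, h, mulVec_zero]⟩
  rcases eq_or_ne q 0 with rfl | hq
  · simpa using h
  have hSym : (A * Aᵀ).IsSymm := by simp [IsSymm, transpose_mul]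
  have hSAx : (A * Aᵀ) *ᵥ (A *ᵥ x) = 0 :=
    hSym.mulVec_eq_zero_of_pow_mulVec_eq_zero hq (by rwa [mulVec_mulVec])
  have hAtAx : Aᵀ *ᵥ (A *ᵥ x) = 0 :=
    Aᵀ.mulVec_eq_zero_of_transpose_mul_self_mulVec_eq_zero (by rwa [transpose_transpose])
  exact A.mulVec_eq_zero_of_transpose_mul_self_mulVec_eq_zero (by rwa [← mulVec_mulVec])

theorem rank_pow_mul_transpose_mul [DecidableEq m] (A : Matrix m n K) (q : ℕ) :
    ((A * Aᵀ) ^ q * A).rank = A.rank := by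
  have hB := LinearMap.finrank_range_add_finrank_ker ((A * Aᵀ) ^ q * A).mulVecLin
  have hA := LinearMap.finrank_range_add_finrank_ker A.mulVecLin
  rw [ker_mulVecLin_pow_mul_transpose_mul] at hB
  exact Nat.add_right_cancel (hB.trans hA.symm)

theorem rank_eq_card_width_iff_det_transpose_mul_self_ne_zero [Fintype ι] [DecidableEq ι]
    (M : Matrix m ι K) :
    M.rank = Fintype.card ι ↔ (Mᵀ * M).det ≠ 0 := by
  rw [← rank_transpose_mul_self, rank_eq_card_iff_det_ne_zero]

end LinearOrderedField

end Matrix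

theorem MeasureTheory.measurePreserving_curry_symm_pi {ι κ X : Type*} [Fintype ι] [Fintype κ]
    [MeasurableSpace X] (μ : ι → κ → Measure X) [∀ i j, IsProbabilityMeasure (μ i j)] :
    MeasurePreserving (MeasurableEquiv.curry ι κ X).symm
      (Measure.pi fun i => Measure.pi fun j => μ i j) (Measure.pi fun p => μ p.1 p.2) where
  measurable := (MeasurableEquiv.curry ι κ X).symm.measurable
  map_eq := by
    simpa only [Measure.infinitePi_eq_pi] using Measure.infinitePi_map_curry_symm μ

namespace MvPolynomial

variable {μ : Measure ℝ} [SigmaFinite μ] [NullSingletonClass μ]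

theorem ae_eval_ne_zero_of_fin {N : ℕ} {P : MvPolynomial (Fin N) ℝ} (hP : P ≠ 0) :
    ∀ᵐ x ∂(Measure.pi fun _ : Fin N => μ), eval x P ≠ 0 := by
  induction N with
  | zero =>
    obtain ⟨c, rfl⟩ := C_surjective (Fin 0) P
    exact .of_forall fun x => by simpa using hP
  | succ N ih =>
    set Q := finSuccEquiv ℝ N P
    have hQ : Q ≠ 0 := by simpa [Q] using hP
    have hslice : ∀ᵐ s ∂(Measure.pi fun _ : Fin N => μ), ∀ᵐ y ∂μ,
        eval (Fin.cons y s : Fin (N + 1) → ℝ) P ≠ 0 := by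
      filter_upwards [ih (Polynomial.leadingCoeff_ne_zero.mpr hQ)] with s hs
      have hQs : Q.map (eval s) ≠ 0 := fun h => hs <| by
        simpa using congrArg (Polynomial.coeff · Q.natDegree) h
      refine measure_mono_null (fun y hy => ?_)
        ((Polynomial.finite_setOfPred_isRoot hQs).measure_zero μ)
      simpa [eval_eq_eval_mv_eval'] using hy
    have hmeas : Measurable fun z : ℝ × (Fin N → ℝ) =>
        eval (Fin.cons z.1 z.2 : Fin (N + 1) → ℝ) P :=
      ((continuous_eval P).comp (continuous_fst.finCons continuous_snd)).measurable
    have hprod : ∀ᵐ z ∂μ.prod (Measure.pi fun _ : Fin N => μ),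
        eval (Fin.cons z.1 z.2 : Fin (N + 1) → ℝ) P ≠ 0 :=
      (Measure.ae_prod_iff_ae_ae (hmeas (measurableSet_singleton 0).compl)).mpr
        ((Measure.ae_ae_comm (p := fun s y => eval (Fin.cons y s : Fin (N + 1) → ℝ) P ≠ 0)
          ((hmeas.comp measurable_swap) (measurableSet_singleton 0).compl)).mp hslice)
    have hsplit := measurePreserving_piFinSuccAbove (fun _ : Fin (N + 1) => μ) 0
    filter_upwards [hsplit.quasiMeasurePreserving.ae hprod] with x hx
    simpa using hx

theorem ae_eval_ne_zero {σ : Type*} [Fintype σ] {P : MvPolynomial σ ℝ} (hP : P ≠ 0) :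
    ∀ᵐ x ∂(Measure.pi fun _ : σ => μ), eval x P ≠ 0 := by
  let e := Fintype.equivFin σ
  have hrename : rename e P ≠ 0 := by
    simpa using (rename_injective e e.injective).ne hP
  have hreindex := measurePreserving_piCongrLeft (fun _ : Fin (Fintype.card σ) => μ) e
  filter_upwards [hreindex.quasiMeasurePreserving.ae (ae_eval_ne_zero_of_fin hrename)] with x hx
  simpa [eval_rename, MeasurableEquiv.piCongrLeft, Equiv.piCongrLeft, Function.comp_def] using hx

end MvPolynomial

theorem Matrix.map_eval_map_C_mul_mvPolynomialX {m n ι R : Type*} [Fintype n] [CommRing R]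
    (B : Matrix m n R) (G : Matrix n ι R) :
    ((B.map MvPolynomial.C : Matrix m n (MvPolynomial (n × ι) R)) * mvPolynomialX n ι R).map
      (MvPolynomial.eval (Function.uncurry G)) = B * G := by
  rw [Matrix.map_mul, Matrix.map_map]
  simp only [Function.comp_def, MvPolynomial.eval_C, map_id']
  exact congrArg (B * ·) (mvPolynomialX_map_eval₂ (RingHom.id R) G)

theorem Matrix.ae_rank_mul_eq_card {m n ι : Type*} [Fintype m] [Fintype n] [Fintype ι]
    [DecidableEq ι] {μ : Measure ℝ} [IsProbabilityMeasure μ] [NullSingletonClass μ]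
    (B : Matrix m n ℝ) (hB : Fintype.card ι ≤ B.rank) :
    ∀ᵐ g ∂(Measure.pi fun _ : n => Measure.pi fun _ : ι => μ),
      (B * of g).rank = Fintype.card ι := by
  set X : Matrix m ι (MvPolynomial (n × ι) ℝ) := B.map MvPolynomial.C * mvPolynomialX n ι ℝ
  have heval (G : Matrix n ι ℝ) :
      MvPolynomial.eval (Function.uncurry G) (Xᵀ * X).det = ((B * G)ᵀ * (B * G)).det := by
    have hX : X.map (MvPolynomial.eval (Function.uncurry G)) = B * G :=
      map_eval_map_C_mul_mvPolynomialX B G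
    rw [RingHom.map_det, RingHom.mapMatrix_apply, Matrix.map_mul, transpose_map, hX]
  obtain ⟨G₀, hG₀⟩ := exists_rank_mul_eq_card B hB
  have hP : (Xᵀ * X).det ≠ 0 := fun h => by
    rw [rank_eq_card_width_iff_det_transpose_mul_self_ne_zero, ← heval, h, map_zero] at hG₀
    exact hG₀ rfl
  have hcurry := measurePreserving_curry_symm_pi fun (_ : n) (_ : ι) => μ
  filter_upwards [hcurry.quasiMeasurePreserving.ae (MvPolynomial.ae_eval_ne_zero hP)] with g hg
  rw [rank_eq_card_width_iff_det_transpose_mul_self_ne_zero, ← heval]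
  exact hg

theorem gaussian_rsvd_sample_full_column_rank_general
    {m n : ℕ} (A : Matrix (Fin m) (Fin n) ℝ) (q ℓ : ℕ)
    (hℓr : ℓ ≤ A.rank) :
    ∀ᵐ g ∂(Measure.pi fun _ : Fin n => Measure.pi fun _ : Fin ℓ => gaussianReal 0 1),
      ((A * Aᵀ) ^ q * A * Matrix.of g).rank = ℓ := by
  have := nullSingletonClass_gaussianReal (μ := 0) one_ne_zero
  simpa using ((A * Aᵀ) ^ q * A).ae_rank_mul_eq_card (ι := Fin ℓ) (μ := gaussianReal 0 1)
    (by simpa [rank_pow_mul_transpose_mul] using hℓr)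

/-- Let A be a fixed real m×n matrix, q a non-negative integer, and ℓ a positive
integer with ℓ ≤ min(n, rank(A)). If G is a standard Gaussian n×ℓ matrix, then with
probability 1 the matrix Y = (AAᵀ)^q·A·G has full column rank ℓ. -/
theorem gaussian_rsvd_sample_full_column_rank
    {m n : ℕ} (A : Matrix (Fin m) (Fin n) ℝ) (q ℓ : ℕ)
    (hℓ0 : 0 < ℓ) (hℓn : ℓ ≤ n) (hℓr : ℓ ≤ A.rank) :
    ∀ᵐ g ∂(Measure.pi fun _ : Fin n => Measure.pi fun _ : Fin ℓ => gaussianReal 0 1),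
      ((A * Aᵀ) ^ q * A * Matrix.of g).rank = ℓ :=
  gaussian_rsvd_sample_full_column_rank_general A q ℓ hℓr
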